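/- arXiv:1306.1556 — 8 statements merged into one kernel-verified Lean document; each statement's English description precedes it below -/
import Mathlib

section
/- For every positive integer n, every real p with 0 ≤ p ≤ 1, every real α > 2 with δ := 2/α, and every real θ' > 0, the improper Riemann integral 2π ∫_0^∞ [1 − (p·v^α/(v^α + θ') + 1 − p)^n] · v dv converges and equals π · θ'^δ · Γ(1+δ) · Γ(1−δ) · D_n(p,δ), where Γ is the Gamma function. -/
/-!
Since `p v^α/(v^α + θ') + 1 - p = 1 - p θ'/(v^α + θ')`, the binomial theorem reduces the
integral to the moments `∫₀^∞ v (v^α + θ')^{-k} dv`, `1 ≤ k ≤ n`. The substitutions `w = v^α`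
and `w = θ' x/(1 - x)` turn these into Beta integrals `θ'^{δ-k} B(δ, k - δ)/α` with `δ = 2/α`,
and the recursions `Γ(k - δ) = (-1)^{k-1} ∏_{j=1}^{k-1} (δ - j) Γ(1 - δ)` and `Γ(1 + δ) = δ Γ(δ)`
turn these Beta values into the coefficients of `D_n(p, δ)`.
-/

open MeasureTheory Real Set

/-- Diversity polynomial `D_n(p,δ) = ∑_{k=1}^n C(n,k) ((∏_{j=1}^{k-1} (δ-j))/(k-1)!) p^k`. -/
noncomputable def divPoly (n : ℕ) (p δ : ℝ) : ℝ :=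
  ∑ k ∈ Finset.Icc 1 n, (n.choose k : ℝ) *
    ((∏ j ∈ Finset.Icc 1 (k - 1), (δ - (j : ℝ))) / (Nat.factorial (k - 1) : ℝ)) * p ^ k

theorem ofReal_cpow_mul_one_sub_cpow {s t x : ℝ} (hx : x ∈ Ioc 0 1) :
    ((x : ℂ) ^ ((s : ℂ) - 1) * (1 - (x : ℂ)) ^ ((t : ℂ) - 1)) =
      ((x ^ (s - 1) * (1 - x) ^ (t - 1) : ℝ) : ℂ) := by
  rw [Complex.ofReal_mul, Complex.ofReal_cpow hx.1.le, Complex.ofReal_cpow (by linarith [hx.2])]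
  push_cast
  rfl

theorem integrableOn_rpow_mul_one_sub_rpow {s t : ℝ} (hs : 0 < s) (ht : 0 < t) :
    IntegrableOn (fun x : ℝ ↦ x ^ (s - 1) * (1 - x) ^ (t - 1)) (Ioo 0 1) := by
  have hc := (intervalIntegrable_iff_integrableOn_Ioc_of_le zero_le_one).mp
    (Complex.betaIntegral_convergent (u := s) (v := t) (by simpa) (by simpa))
  refine (IntegrableOn.congr_fun hc.re (fun x hx ↦ ?_) measurableSet_Ioc).mono_set
    Ioo_subset_Ioc_self
  simp [ofReal_cpow_mul_one_sub_cpow hx]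

theorem integral_rpow_mul_one_sub_rpow {s t : ℝ} (hs : 0 < s) (ht : 0 < t) :
    ∫ x in Ioo (0 : ℝ) 1, x ^ (s - 1) * (1 - x) ^ (t - 1) =
      Gamma s * Gamma t / Gamma (s + t) := by
  have h := Complex.betaIntegral_eq_Gamma_mul_div s t (by simpa) (by simpa)
  rw [Complex.betaIntegral, intervalIntegral.integral_of_le zero_le_one,
    setIntegral_congr_fun measurableSet_Ioc fun x hx ↦ ofReal_cpow_mul_one_sub_cpow hx,
    integral_Ioc_eq_integral_Ioo, integral_complex_ofReal, ← Complex.ofReal_add] at h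
  simp only [Complex.Gamma_ofReal, ← Complex.ofReal_mul, ← Complex.ofReal_div] at h
  exact_mod_cast h

section
variable {θ : ℝ}

theorem image_mul_div_one_sub_Ioo (hθ : 0 < θ) :
    (fun x ↦ θ * x / (1 - x)) '' Ioo 0 1 = Ioi 0 := by
  ext u
  constructor
  · rintro ⟨x, ⟨hx0, hx1⟩, rfl⟩
    exact div_pos (mul_pos hθ hx0) (sub_pos.mpr hx1)
  · intro hu
    have hu' : 0 < u + θ := add_pos hu hθ
    refine ⟨u / (u + θ), ⟨div_pos hu hu', (div_lt_one hu').mpr (by linarith)⟩, ?_⟩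
    have : 1 - u / (u + θ) = θ / (u + θ) := by field_simp; ring
    simp only [this]
    field_simp

theorem hasDerivAt_mul_div_one_sub {x : ℝ} (hx : x ≠ 1) :
    HasDerivAt (fun x ↦ θ * x / (1 - x)) (θ / (1 - x) ^ 2) x := by
  have hx' : 1 - x ≠ 0 := sub_ne_zero.mpr hx.symm
  refine (((hasDerivAt_id' x).const_mul θ).div ((hasDerivAt_id' x).const_sub 1) hx').congr_deriv ?_
  ring

theorem injOn_mul_div_one_sub (hθ : θ ≠ 0) : InjOn (fun x ↦ θ * x / (1 - x)) (Ioo 0 1) := by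
  intro x ⟨_, hx⟩ y ⟨_, hy⟩ hxy
  simp only at hxy
  rw [div_eq_div_iff (sub_pos.mpr hx).ne' (sub_pos.mpr hy).ne'] at hxy
  have : θ * (x - y) = 0 := by linear_combination hxy
  simpa [hθ, sub_eq_zero] using this

theorem abs_mul_rpow_mul_div_one_sub {s t x : ℝ} (hθ : 0 < θ) (hx : x ∈ Ioo 0 1) :
    |θ / (1 - x) ^ 2| * ((θ * x / (1 - x)) ^ (s - 1) * (θ * x / (1 - x) + θ) ^ (-(s + t))) =
      θ ^ (-t) * (x ^ (s - 1) * (1 - x) ^ (t - 1)) := by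
  obtain ⟨hx0, hx1⟩ := hx
  have hy : 0 < 1 - x := sub_pos.mpr hx1
  have hsum : θ * x / (1 - x) + θ = θ / (1 - x) := by field_simp; ring
  rw [hsum, abs_of_pos (by positivity), div_rpow (by positivity) hy.le, mul_rpow hθ.le hx0.le,
    div_rpow hθ.le hy.le]
  simp only [rpow_neg hθ.le, rpow_neg hy.le]
  have hθs : θ ^ (s + t) = θ ^ (s - 1) * θ ^ t * θ := by
    rw [← rpow_add hθ, ← rpow_add_one hθ.ne']; ring_nf
  have hys : (1 - x) ^ (s + t) = (1 - x) ^ (s - 1) * (1 - x) ^ (t - 1) * (1 - x) ^ 2 := by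
    rw [← rpow_add hy, ← rpow_natCast, ← rpow_add hy]; ring_nf
  rw [hθs, hys]
  field_simp

variable {s t : ℝ}

theorem integrableOn_rpow_mul_add_rpow_neg (hs : 0 < s) (ht : 0 < t) (hθ : 0 < θ) :
    IntegrableOn (fun w ↦ w ^ (s - 1) * (w + θ) ^ (-(s + t))) (Ioi 0) := by
  rw [← image_mul_div_one_sub_Ioo hθ, integrableOn_image_iff_integrableOn_abs_deriv_smul
    measurableSet_Ioo (fun _ hx ↦ (hasDerivAt_mul_div_one_sub hx.2.ne).hasDerivWithinAt)
    (injOn_mul_div_one_sub hθ.ne')]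
  simp only [smul_eq_mul]
  exact IntegrableOn.congr_fun ((integrableOn_rpow_mul_one_sub_rpow hs ht).const_mul _)
    (fun x hx ↦ (abs_mul_rpow_mul_div_one_sub hθ hx).symm) measurableSet_Ioo

theorem integral_rpow_mul_add_rpow_neg (hs : 0 < s) (ht : 0 < t) (hθ : 0 < θ) :
    ∫ w in Ioi 0, w ^ (s - 1) * (w + θ) ^ (-(s + t)) =
      θ ^ (-t) * (Gamma s * Gamma t / Gamma (s + t)) := by
  rw [← image_mul_div_one_sub_Ioo hθ, integral_image_eq_integral_abs_deriv_smul
    measurableSet_Ioo (fun _ hx ↦ (hasDerivAt_mul_div_one_sub hx.2.ne).hasDerivWithinAt)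
    (injOn_mul_div_one_sub hθ.ne')]
  simp only [smul_eq_mul]
  rw [setIntegral_congr_fun measurableSet_Ioo fun x hx ↦ abs_mul_rpow_mul_div_one_sub hθ hx,
    integral_const_mul, integral_rpow_mul_one_sub_rpow hs ht]

end

theorem rpow_sub_one_mul_rpow_rpow_div_sub_one {α s x : ℝ} (hα : α ≠ 0) (hx : 0 < x) :
    x ^ (α - 1) * (x ^ α) ^ (s / α - 1) = x ^ (s - 1) := by
  rw [← rpow_mul hx.le, ← rpow_add hx]
  congr 1
  field_simp
  ring

section
variable {α s b θ : ℝ}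

theorem integrableOn_rpow_mul_rpow_add_rpow_neg (hα : 0 < α) (hs : 0 < s) (hb : s / α < b)
    (hθ : 0 < θ) : IntegrableOn (fun v ↦ v ^ (s - 1) * (v ^ α + θ) ^ (-b)) (Ioi 0) := by
  have h := integrableOn_rpow_mul_add_rpow_neg (div_pos hs hα) (sub_pos.mpr hb) hθ
  rw [add_sub_cancel, ← integrableOn_Ioi_comp_rpow_iff' _ hα.ne'] at h
  refine h.congr_fun (fun v hv ↦ ?_) measurableSet_Ioi
  simp only [smul_eq_mul, ← mul_assoc, rpow_sub_one_mul_rpow_rpow_div_sub_one hα.ne' hv]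

theorem integral_rpow_mul_rpow_add_rpow_neg (hα : 0 < α) (hs : 0 < s) (hb : s / α < b)
    (hθ : 0 < θ) :
    ∫ v in Ioi 0, v ^ (s - 1) * (v ^ α + θ) ^ (-b) =
      θ ^ (s / α - b) * (Gamma (s / α) * Gamma (b - s / α) / Gamma b) / α := by
  have h := integral_rpow_mul_add_rpow_neg (div_pos hs hα) (sub_pos.mpr hb) hθ
  rw [add_sub_cancel, neg_sub, ← integral_comp_rpow_Ioi_of_pos hα] at h
  rw [← h, eq_div_iff hα.ne', ← integral_mul_const]
  refine setIntegral_congr_fun measurableSet_Ioi fun v hv ↦ ?_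
  rw [smul_eq_mul, ← rpow_sub_one_mul_rpow_rpow_div_sub_one hα.ne' hv]
  ring

end

theorem one_sub_one_sub_pow {R : Type*} [CommRing R] (x : R) (n : ℕ) :
    1 - (1 - x) ^ n = ∑ k ∈ Finset.Icc 1 n, (-1) ^ (k + 1) * (n.choose k : R) * x ^ k := by
  have hrange : Finset.range (n + 1) = insert 0 (Finset.Icc 1 n) := by
    ext k; simp; omega
  rw [← neg_add_eq_sub x 1, add_pow, hrange, Finset.sum_insert (by simp)]
  simp only [one_pow, mul_one, pow_zero, Nat.choose_zero_right, Nat.cast_one,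
    sub_add_cancel_left, ← Finset.sum_neg_distrib]
  refine Finset.sum_congr rfl fun k _ ↦ ?_
  rw [neg_pow, pow_succ]
  ring

theorem Real.Gamma_nat_add_one_sub {δ : ℝ} (hδ : δ < 1) (m : ℕ) :
    Gamma (m + 1 - δ) = (-1) ^ m * (∏ j ∈ Finset.Icc 1 m, (δ - j)) * Gamma (1 - δ) := by
  induction m with
  | zero => simp
  | succ m ih =>
    have hne : (m : ℝ) + 1 - δ ≠ 0 := by
      have : (0 : ℝ) ≤ m := m.cast_nonneg
      linarith
    rw [Nat.cast_succ, add_right_comm, add_sub_right_comm, Gamma_add_one hne, ih,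
      Finset.prod_Icc_succ_top (by omega)]
    push_cast
    ring

theorem Real.neg_one_pow_mul_beta_nat_sub {δ : ℝ} (hδ0 : 0 < δ) (hδ1 : δ < 1) {k : ℕ}
    (hk : 1 ≤ k) :
    (-1) ^ (k + 1) * δ * (Gamma δ * Gamma (k - δ) / Gamma k) =
      Gamma (1 + δ) * Gamma (1 - δ) *
        ((∏ j ∈ Finset.Icc 1 (k - 1), (δ - j)) / (k - 1).factorial) := by
  obtain ⟨m, rfl⟩ : ∃ m, k = m + 1 := ⟨k - 1, by omega⟩
  have hsign : ((-1 : ℝ) ^ (m + 1 + 1)) * (-1) ^ m = 1 := by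
    rw [← pow_add, show m + 1 + 1 + m = 2 * (m + 1) by ring, pow_mul]; norm_num
  push_cast
  rw [add_comm 1 δ, Gamma_add_one hδ0.ne', Gamma_nat_add_one_sub hδ1, Gamma_nat_eq_factorial]
  linear_combination (δ * Gamma δ * (∏ j ∈ Finset.Icc 1 m, (δ - j)) * Gamma (1 - δ) / m.factorial) *
    hsign

theorem one_sub_mul_div_add_sub_pow_eq_sum (n : ℕ) (p θ A : ℝ) (hA : A + θ ≠ 0) :
    1 - (p * A / (A + θ) + 1 - p) ^ n =
      ∑ k ∈ Finset.Icc 1 n, (-1) ^ (k + 1) * (n.choose k : ℝ) * (p * θ) ^ k * ((A + θ) ^ k)⁻¹ := by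
  have hbase : p * A / (A + θ) + 1 - p = 1 - p * θ / (A + θ) := by field_simp; ring
  rw [hbase, one_sub_one_sub_pow]
  exact Finset.sum_congr rfl fun k _ ↦ by ring

section
variable {α θ : ℝ} {k : ℕ}

theorem integrableOn_mul_inv_rpow_add_pow (hα : 2 < α) (hθ : 0 < θ) (hk : 1 ≤ k) :
    IntegrableOn (fun v ↦ v * ((v ^ α + θ) ^ k)⁻¹) (Ioi 0) := by
  have hα0 : 0 < α := by linarith
  have hδk : 2 / α < k := ((div_lt_one hα0).mpr hα).trans_le (by exact_mod_cast hk)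
  have h := integrableOn_rpow_mul_rpow_add_rpow_neg hα0 two_pos hδk hθ
  norm_num at h
  exact h

theorem neg_one_pow_mul_pow_mul_integral_mul_inv_rpow_add_pow (hα : 2 < α) (hθ : 0 < θ)
    (hk : 1 ≤ k) :
    (-1) ^ (k + 1) * θ ^ k * ∫ v in Ioi 0, v * ((v ^ α + θ) ^ k)⁻¹ =
      θ ^ (2 / α) * Gamma (1 + 2 / α) * Gamma (1 - 2 / α) *
        ((∏ j ∈ Finset.Icc 1 (k - 1), (2 / α - j)) / (k - 1).factorial) / 2 := by
  have hα0 : 0 < α := by linarith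
  have hδ1 : 2 / α < 1 := (div_lt_one hα0).mpr hα
  have hδk : 2 / α < k := hδ1.trans_le (by exact_mod_cast hk)
  have hθk : θ ^ k * θ ^ (2 / α - k) = θ ^ (2 / α) := by
    rw [← rpow_natCast, ← rpow_add hθ, add_sub_cancel]
  have hcoef := neg_one_pow_mul_beta_nat_sub (by positivity) hδ1 hk
  have hint := integral_rpow_mul_rpow_add_rpow_neg hα0 two_pos hδk hθ
  norm_num at hint
  rw [hint]
  linear_combination ((-1) ^ (k + 1) * (Gamma (2 / α) * Gamma (k - 2 / α) / Gamma k) / α) * hθk +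
    (θ ^ (2 / α) / 2) * hcoef

end

theorem stmt0_general (n : ℕ) (p : ℝ)
    (α : ℝ) (hα : 2 < α) (θ' : ℝ) (hθ : 0 < θ') :
    IntegrableOn
      (fun v : ℝ => (1 - (p * v ^ α / (v ^ α + θ') + 1 - p) ^ n) * v) (Ioi 0) volume ∧
    2 * π * ∫ v in Ioi (0 : ℝ), (1 - (p * v ^ α / (v ^ α + θ') + 1 - p) ^ n) * v =
      π * θ' ^ (2 / α) * Real.Gamma (1 + 2 / α) * Real.Gamma (1 - 2 / α) *
        divPoly n p (2 / α) := by
  have hexpand : EqOn (fun v : ℝ ↦ (1 - (p * v ^ α / (v ^ α + θ') + 1 - p) ^ n) * v)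
      (fun v ↦ ∑ k ∈ Finset.Icc 1 n, (-1) ^ (k + 1) * (n.choose k : ℝ) * (p * θ') ^ k *
        (v * ((v ^ α + θ') ^ k)⁻¹)) (Ioi 0) := fun v hv ↦ by
    simp only [one_sub_mul_div_add_sub_pow_eq_sum n p θ' _ (add_pos (rpow_pos_of_pos hv α) hθ).ne',
      Finset.sum_mul, mul_comm v, mul_assoc]
  have hint : ∀ k ∈ Finset.Icc 1 n, IntegrableOn (fun v ↦ (-1) ^ (k + 1) * (n.choose k : ℝ) *
      (p * θ') ^ k * (v * ((v ^ α + θ') ^ k)⁻¹)) (Ioi 0) := fun k hk ↦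
    (integrableOn_mul_inv_rpow_add_pow hα hθ (Finset.mem_Icc.mp hk).1).const_mul _
  refine ⟨IntegrableOn.congr_fun (integrable_finsetSum _ hint) hexpand.symm measurableSet_Ioi, ?_⟩
  rw [setIntegral_congr_fun measurableSet_Ioi hexpand, integral_finsetSum _ hint, divPoly,
    Finset.mul_sum, Finset.mul_sum]
  refine Finset.sum_congr rfl fun k hk ↦ ?_
  rw [integral_const_mul]
  linear_combination (2 * π * (n.choose k : ℝ) * p ^ k) *
    neg_one_pow_mul_pow_mul_integral_mul_inv_rpow_add_pow hα hθ (Finset.mem_Icc.mp hk).1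

theorem stmt0 (n : ℕ) (hn : 1 ≤ n) (p : ℝ) (hp0 : 0 ≤ p) (hp1 : p ≤ 1)
    (α : ℝ) (hα : 2 < α) (θ' : ℝ) (hθ : 0 < θ') :
    IntegrableOn
      (fun v : ℝ => (1 - (p * v ^ α / (v ^ α + θ') + 1 - p) ^ n) * v) (Ioi 0) volume ∧
    2 * π * ∫ v in Ioi (0 : ℝ), (1 - (p * v ^ α / (v ^ α + θ') + 1 - p) ^ n) * v =
      π * θ' ^ (2 / α) * Real.Gamma (1 + 2 / α) * Real.Gamma (1 - 2 / α) *
        divPoly n p (2 / α) :=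
  stmt0_general n p α hα θ' hθ
end

section
/- For every integer n ≥ 1, every real p, and every real δ with 0 < δ < 1, the alternating sum ∑_{k=1}^n (−1)^{k+1} · (n choose k) · D_k(p,δ) equals p^n · Γ(n−δ) / (Γ(n) · Γ(1−δ)), where Γ is the Gamma function. -/
open Real

/-!
`D_k(p, δ) = ∑_{m=1}^k C(k,m) a_m` is the binomial transform of `a_m = C(δ-1, m-1) p^m`, so the
alternating sum inverts it and leaves `(-1)^{n+1} a_n`. The identity
`Γ(n - δ) = (1-δ)(2-δ)⋯(n-1-δ) Γ(1-δ)` turns this coefficient into the Gamma quotient.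
-/

open Finset Polynomial

section BinomialInversion

variable {R : Type*} [CommRing R]

theorem sum_range_neg_one_pow_mul_choose_mul_choose (n m : ℕ) :
    ∑ k ∈ range (n + 1), (-1 : R) ^ k * n.choose k * k.choose m =
      if m = n then (-1) ^ n else 0 := by
  -- compare the coefficients of `X ^ m` in `(-X) ^ n = (1 - (X + 1)) ^ n`
  have h : C ((-1 : R) ^ n) * X ^ n =
      ∑ k ∈ range (n + 1), C ((-1 : R) ^ k * n.choose k) * (X + 1) ^ k := by
    rw [map_pow, ← mul_pow, show C (-1 : R) * X = C (-1) * (X + 1) + 1 by simp, add_pow]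
    refine sum_congr rfl fun k _ => ?_
    simp only [one_pow, mul_one, map_mul, map_pow, map_natCast, mul_pow]
    ring
  have := congrArg (coeff · m) h
  simp only [finsetSum_coeff, coeff_C_mul, coeff_X_add_one_pow, coeff_X_pow] at this
  simpa [eq_comm] using this.symm

theorem sum_Icc_neg_one_pow_succ_mul_choose_mul_choose {n m : ℕ} (hm : 1 ≤ m) :
    ∑ k ∈ Icc 1 n, (-1 : R) ^ (k + 1) * n.choose k * k.choose m =
      if m = n then (-1) ^ (n + 1) else 0 := by
  have h := sum_range_neg_one_pow_mul_choose_mul_choose (R := R) n m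
  rw [range_eq_Ico, sum_eq_sum_Ico_succ_bot (Nat.zero_lt_succ n), Nat.choose_eq_zero_of_lt hm,
    Nat.cast_zero, mul_zero, zero_add, zero_add, Nat.succ_eq_add_one,
    Ico_add_one_right_eq_Icc] at h
  simp only [pow_succ, mul_neg_one, neg_mul, sum_neg_distrib, h]
  split_ifs <;> simp

theorem sum_Icc_neg_one_pow_succ_mul_choose_mul_sum_Icc_choose_mul (f : ℕ → R) {n : ℕ}
    (hn : 1 ≤ n) :
    ∑ k ∈ Icc 1 n, (-1 : R) ^ (k + 1) * n.choose k * ∑ m ∈ Icc 1 k, k.choose m * f m =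
      (-1) ^ (n + 1) * f n := by
  have extend : ∀ k ∈ Icc 1 n, ∑ m ∈ Icc 1 k, (k.choose m : R) * f m =
      ∑ m ∈ Icc 1 n, k.choose m * f m := fun k hk =>
    sum_subset (Icc_subset_Icc_right (mem_Icc.mp hk).2) fun m _ hm => by
      rw [Nat.choose_eq_zero_of_lt (by simp_all), Nat.cast_zero, zero_mul]
  calc _ = ∑ m ∈ Icc 1 n,
          (∑ k ∈ Icc 1 n, (-1 : R) ^ (k + 1) * n.choose k * k.choose m) * f m := by
        rw [sum_congr rfl fun k hk => congrArg _ (extend k hk)]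
        simp only [mul_sum, sum_mul, mul_assoc]
        exact sum_comm
    _ = ∑ m ∈ Icc 1 n, (if m = n then (-1 : R) ^ (n + 1) else 0) * f m :=
        sum_congr rfl fun m hm => by
          rw [sum_Icc_neg_one_pow_succ_mul_choose_mul_choose (mem_Icc.mp hm).1]
    _ = _ := by simp [hn]

end BinomialInversion

theorem neg_one_pow_mul_prod_Icc_sub {R : Type*} [CommRing R] (x : R) (m : ℕ) :
    (-1) ^ m * ∏ j ∈ Icc 1 m, (x - j) = ∏ j ∈ range m, (1 - x + j) := by
  induction m with
  | zero => simp
  | succ m ih =>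
    rw [prod_Icc_succ_top (by omega), prod_range_succ, ← ih]
    push_cast
    ring

theorem Real.Gamma_add_nat_eq_prod_range_mul {x : ℝ} (hx : ∀ k : ℕ, x ≠ -k) (m : ℕ) :
    Gamma (x + m) = (∏ j ∈ range m, (x + j)) * Gamma x := by
  induction m with
  | zero => simp
  | succ m ih =>
    have hxm : x + m ≠ 0 := fun h => hx m (eq_neg_of_add_eq_zero_left h)
    rw [prod_range_succ, Nat.cast_succ, ← add_assoc, Gamma_add_one hxm, ih]
    ring

theorem Real.Gamma_natCast_sub_div_Gamma_mul_Gamma_one_sub {δ : ℝ} (hδ : δ < 1) {n : ℕ}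
    (hn : 1 ≤ n) :
    Gamma (n - δ) / (Gamma n * Gamma (1 - δ)) =
      (-1) ^ (n + 1) * (∏ j ∈ Icc 1 (n - 1), (δ - j)) / (n - 1).factorial := by
  obtain ⟨m, rfl⟩ := Nat.exists_eq_add_of_le' hn
  have hx : ∀ k : ℕ, 1 - δ ≠ -k := fun k => by
    have : (0 : ℝ) ≤ k := k.cast_nonneg
    linarith
  have hΓ : Gamma (1 - δ) ≠ 0 := (Gamma_pos_of_pos (by linarith)).ne'
  rw [Nat.add_sub_cancel, Nat.cast_succ, Gamma_nat_eq_factorial, pow_succ, pow_succ,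
    show (m : ℝ) + 1 - δ = 1 - δ + m by ring, Gamma_add_nat_eq_prod_range_mul hx,
    ← neg_one_pow_mul_prod_Icc_sub]
  field_simp

theorem stmt2_general (n : ℕ) (hn : 1 ≤ n) (p : ℝ) (δ : ℝ) (hδ1 : δ < 1) :
    ∑ k ∈ Finset.Icc 1 n, (-1 : ℝ) ^ (k + 1) * (n.choose k : ℝ) * divPoly k p δ =
      p ^ n * Real.Gamma ((n : ℝ) - δ) / (Real.Gamma n * Real.Gamma (1 - δ)) := by
  have hdiv : ∀ k, divPoly k p δ = ∑ m ∈ Icc 1 k, (k.choose m : ℝ) *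
      ((∏ j ∈ Icc 1 (m - 1), (δ - j)) / (m - 1).factorial * p ^ m) := fun k =>
    sum_congr rfl fun _ _ => mul_assoc _ _ _
  simp only [hdiv]
  rw [sum_Icc_neg_one_pow_succ_mul_choose_mul_sum_Icc_choose_mul _ hn, mul_div_assoc,
    Gamma_natCast_sub_div_Gamma_mul_Gamma_one_sub hδ1 hn]
  ring

theorem stmt2 (n : ℕ) (hn : 1 ≤ n) (p : ℝ) (δ : ℝ) (hδ0 : 0 < δ) (hδ1 : δ < 1) :
    ∑ k ∈ Finset.Icc 1 n, (-1 : ℝ) ^ (k + 1) * (n.choose k : ℝ) * divPoly k p δ =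
      p ^ n * Real.Gamma ((n : ℝ) - δ) / (Real.Gamma n * Real.Gamma (1 - δ)) :=
  stmt2_general n hn p δ hδ1
end

section
/- Fix an integer n ≥ 1, a real p with 0 < p ≤ 1, and a real δ with 0 < δ < 1. Define ψ_m(Δ) = ∑_{k=1}^m (−1)^{k+1} · (m choose k) · exp(−Δ · D_k(p,δ)) for positive integers m and real Δ. Then the limit as Δ → 0⁺ of (1 − ψ_{n+1}(Δ)) / (1 − ψ_n(Δ)) exists and equals p · (1 − δ/n). -/
open Real Filter Set

/-- `ψ_m(Δ)`: probability of succeeding at least once in `m` transmissions. -/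
noncomputable def psiSucc (m : ℕ) (p δ Δ : ℝ) : ℝ :=
  ∑ k ∈ Finset.Icc 1 m, (-1 : ℝ) ^ (k + 1) * (m.choose k : ℝ) *
    Real.exp (-Δ * divPoly k p δ)

/-!
Write `∇^m f` for the `m`-th forward difference of `f : ℕ → ℝ` at `0`. Since `D_0 = 0`,
`1 - ψ_m(Δ) = (-1)^m ∇^m (k ↦ exp(-Δ D_k))`, which vanishes at `Δ = 0` with derivative
`(-1)^(m+1) ∇^m (k ↦ D_k)` there. Writing `D_k = ∑_i C(k,i) a_i` and using
`∇^m (k ↦ C(k,i)) = [i = m]`, this derivative is `(-1)^(m+1) a_m`, so the ratio tends to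
`-a_(n+1) / a_n = p (1 - δ/n)`.
-/

open scoped fwdDiff Topology

section FwdDiff

variable {G : Type*} [AddCommGroup G]

theorem fwdDiff_iter_zero_congr {f g : ℕ → G} {m : ℕ} (h : ∀ k ≤ m, f k = g k) :
    (Δ_[1])^[m] f 0 = (Δ_[1])^[m] g 0 := by
  simp only [fwdDiff_iter_eq_sum_shift, zero_add]
  refine Finset.sum_congr rfl fun k hk => ?_
  rw [h _ (by simpa [Nat.lt_succ_iff] using hk)]

theorem fwdDiff_iter_choose_smul_zero (a : G) (i m : ℕ) :
    (Δ_[1])^[m] (fun k : ℕ => (k.choose i : ℤ) • a) 0 = if m = i then a else 0 := by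
  have h := fwdDiff_iter_choose_zero i m
  rw [fwdDiff_iter_eq_sum_shift] at h
  rw [fwdDiff_iter_eq_sum_shift]
  simp only [smul_smul, ← Finset.sum_smul, smul_eq_mul] at h ⊢
  rw [h]
  split_ifs <;> simp

theorem fwdDiff_iter_sum_choose_smul_zero (s : Finset ℕ) (a : ℕ → G) (m : ℕ) :
    (Δ_[1])^[m] (fun k : ℕ => ∑ i ∈ s, (k.choose i : ℤ) • a i) 0 = if m ∈ s then a m else 0 := by
  have hsum : (fun k : ℕ => ∑ i ∈ s, (k.choose i : ℤ) • a i)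
      = ∑ i ∈ s, fun k : ℕ => (k.choose i : ℤ) • a i := by
    ext k; simp
  rw [hsum, fwdDiff_iter_finsetSum, Finset.sum_apply]
  simp only [fwdDiff_iter_choose_smul_zero, Finset.sum_ite_eq]

end FwdDiff

theorem HasDerivAt.fwdDiff_iter {𝕜 E M : Type*} [NontriviallyNormedField 𝕜]
    [NormedAddCommGroup E] [NormedSpace 𝕜 E] [AddCommMonoid M] {F : 𝕜 → M → E} {F' : M → E}
    {t : 𝕜} (hF : ∀ k, HasDerivAt (F · k) (F' k) t) (h : M) (m : ℕ) (y : M) :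
    HasDerivAt (fun s => (Δ_[h])^[m] (F s) y) ((Δ_[h])^[m] F' y) t := by
  simp only [fwdDiff_iter_eq_sum_shift]
  exact HasDerivAt.fun_sum fun k _ => (hF _).fun_const_smul _

theorem tendsto_div_of_hasDerivAt {𝕜 : Type*} [NontriviallyNormedField 𝕜] {f g : 𝕜 → 𝕜}
    {a b x : 𝕜} (hf : HasDerivAt f a x) (hg : HasDerivAt g b x) (hf0 : f x = 0) (hg0 : g x = 0)
    (hb : b ≠ 0) : Tendsto (fun t => f t / g t) (𝓝[≠] x) (𝓝 (a / b)) := by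
  have hslope := (hasDerivAt_iff_tendsto_slope.mp hf).div (hasDerivAt_iff_tendsto_slope.mp hg) hb
  refine hslope.congr' ?_
  filter_upwards [self_mem_nhdsWithin] with t ht
  simp only [Pi.div_apply]
  rw [slope_def_field, slope_def_field, hf0, hg0, sub_zero, sub_zero,
    div_div_div_cancel_right₀ (sub_ne_zero.mpr ht)]

noncomputable def divPolyCoeff (p δ : ℝ) (i : ℕ) : ℝ :=
  (∏ j ∈ Finset.Icc 1 (i - 1), (δ - (j : ℝ))) / (Nat.factorial (i - 1) : ℝ) * p ^ i

section DiversityPolynomial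

variable {p δ : ℝ}

theorem divPoly_eq_sum_choose_smul {k m : ℕ} (hk : k ≤ m) :
    divPoly k p δ = ∑ i ∈ Finset.Icc 1 m, (k.choose i : ℤ) • divPolyCoeff p δ i := by
  rw [divPoly, ← Finset.sum_subset (Finset.Icc_subset_Icc_right hk)]
  · refine Finset.sum_congr rfl fun i _ => ?_
    rw [divPolyCoeff, zsmul_eq_mul]
    push_cast; ring
  · intro i hi hik
    have hki : k < i := by simp only [Finset.mem_Icc] at hi hik; omega
    simp [Nat.choose_eq_zero_of_lt hki]

theorem fwdDiff_iter_divPoly {m : ℕ} (hm : 1 ≤ m) :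
    (Δ_[1])^[m] (fun k => divPoly k p δ) 0 = divPolyCoeff p δ m := by
  rw [fwdDiff_iter_zero_congr fun k hk => divPoly_eq_sum_choose_smul hk,
    fwdDiff_iter_sum_choose_smul_zero, if_pos (Finset.mem_Icc.mpr ⟨hm, le_rfl⟩)]

theorem divPolyCoeff_ne_zero (hp : p ≠ 0) (hδ : δ < 1) (i : ℕ) : divPolyCoeff p δ i ≠ 0 := by
  refine mul_ne_zero (div_ne_zero (Finset.prod_ne_zero_iff.mpr fun j hj => ?_) ?_)
    (pow_ne_zero _ hp)
  · have : (1 : ℝ) ≤ j := by exact_mod_cast (Finset.mem_Icc.mp hj).1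
    linarith
  · exact_mod_cast (Nat.factorial_pos _).ne'

theorem divPolyCoeff_succ {n : ℕ} (hn : n ≠ 0) :
    divPolyCoeff p δ (n + 1) = divPolyCoeff p δ n * (p * ((δ - n) / n)) := by
  obtain ⟨m, rfl⟩ := Nat.exists_eq_succ_of_ne_zero hn
  rw [divPolyCoeff, divPolyCoeff, Nat.add_sub_cancel, Nat.succ_sub_one,
    Finset.prod_Icc_succ_top (Nat.le_add_left 1 m), Nat.factorial_succ]
  have : (m.factorial : ℝ) ≠ 0 := by exact_mod_cast m.factorial_ne_zero
  push_cast
  field_simp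
  ring

end DiversityPolynomial

section Outage

variable {p δ : ℝ}

theorem neg_one_pow_mul_neg_one_pow_sub {R : Type*} [Ring R] {k m : ℕ} (hk : k ≤ m) :
    (-1 : R) ^ m * (-1) ^ (m - k) = (-1) ^ k := by
  rw [← pow_add, show m + (m - k) = 2 * (m - k) + k by omega, pow_add, pow_mul]
  norm_num

theorem one_sub_psiSucc_eq_fwdDiff_iter (m : ℕ) (p δ Δ : ℝ) :
    1 - psiSucc m p δ Δ = (-1) ^ m * (Δ_[1])^[m] (fun k => exp (-Δ * divPoly k p δ)) 0 := by
  rw [fwdDiff_iter_eq_sum_shift, Finset.mul_sum, Finset.sum_range_succ', psiSucc,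
    ← Finset.Ico_add_one_right_eq_Icc, Finset.sum_Ico_eq_sum_range, Nat.add_sub_cancel]
  have hD0 : divPoly 0 p δ = 0 := by simp [divPoly]
  simp only [zsmul_eq_mul, zero_add, smul_eq_mul, mul_one, Nat.sub_zero, hD0]
  rw [sub_eq_neg_add, ← Finset.sum_neg_distrib]
  congr 1
  · refine Finset.sum_congr rfl fun k hk => ?_
    push_cast
    rw [← mul_assoc, ← mul_assoc,
      neg_one_pow_mul_neg_one_pow_sub (k := k + 1) (Finset.mem_range.mp hk), add_comm 1 k]
    ring
  · simp [← mul_pow]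

theorem one_sub_psiSucc_at_zero {m : ℕ} (hm : m ≠ 0) : 1 - psiSucc m p δ 0 = 0 := by
  obtain ⟨m, rfl⟩ := Nat.exists_eq_succ_of_ne_zero hm
  simp [one_sub_psiSucc_eq_fwdDiff_iter, Function.iterate_succ_apply,
    Function.iterate_fixed (fwdDiff_const (h := 1) (0 : ℝ))]

theorem hasDerivAt_one_sub_psiSucc {m : ℕ} (hm : 1 ≤ m) :
    HasDerivAt (fun Δ => 1 - psiSucc m p δ Δ) ((-1) ^ (m + 1) * divPolyCoeff p δ m) 0 := by
  have hexp : ∀ k, HasDerivAt (fun Δ => exp (-Δ * divPoly k p δ)) (-divPoly k p δ) 0 := fun k => by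
    simpa using ((hasDerivAt_id (0 : ℝ)).neg.mul_const (divPoly k p δ)).exp
  have hdiff : (Δ_[1])^[m] (fun k => -divPoly k p δ) 0 = -divPolyCoeff p δ m := by
    rw [← fwdDiff_iter_divPoly hm, fwdDiff_iter_eq_sum_shift, fwdDiff_iter_eq_sum_shift,
      ← Finset.sum_neg_distrib]
    simp
  simp_rw [one_sub_psiSucc_eq_fwdDiff_iter]
  refine ((HasDerivAt.fwdDiff_iter hexp 1 m 0).const_mul ((-1 : ℝ) ^ m)).congr_deriv ?_
  rw [hdiff, pow_succ]
  ring

end Outage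

theorem stmt5_general (n : ℕ) (hn : 1 ≤ n) (p : ℝ) (hp0 : 0 < p)
    (δ : ℝ) (hδ1 : δ < 1) :
    Tendsto (fun Δ : ℝ => (1 - psiSucc (n + 1) p δ Δ) / (1 - psiSucc n p δ Δ))
      (nhdsWithin 0 (Ioi 0)) (nhds (p * (1 - δ / n))) := by
  have hn0 : n ≠ 0 := Nat.one_le_iff_ne_zero.mp hn
  have hcoeff := divPolyCoeff_ne_zero hp0.ne' hδ1 n
  have hratio := tendsto_div_of_hasDerivAt
    (hasDerivAt_one_sub_psiSucc (p := p) (δ := δ) (Nat.le_add_left 1 n))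
    (hasDerivAt_one_sub_psiSucc (p := p) (δ := δ) hn) (one_sub_psiSucc_at_zero n.succ_ne_zero)
    (one_sub_psiSucc_at_zero hn0) (by simp [hcoeff])
  convert hratio.mono_left (nhdsGT_le_nhdsNE 0) using 2
  rw [divPolyCoeff_succ hn0, pow_succ]
  field_simp
  ring

theorem stmt5 (n : ℕ) (hn : 1 ≤ n) (p : ℝ) (hp0 : 0 < p) (hp1 : p ≤ 1)
    (δ : ℝ) (hδ0 : 0 < δ) (hδ1 : δ < 1) :
    Tendsto (fun Δ : ℝ => (1 - psiSucc (n + 1) p δ Δ) / (1 - psiSucc n p δ Δ))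
      (nhdsWithin 0 (Ioi 0)) (nhds (p * (1 - δ / n))) :=
  stmt5_general n hn p hp0 δ hδ1
end

section
/- For every real p with 0 ≤ p ≤ 1, every real δ with 0 ≤ δ ≤ 1, and every real ν ≠ 0, one has 2·cosh(ν·δ) − p · sinh(ν·(1−δ))/sinh(ν) ≥ 2 − p·(1−δ). -/
/-!
For `0 ≤ t ≤ 1` the function `x ↦ t * sinh x - sinh (x * t)` has derivative
`t * (cosh x - cosh (x * t)) ≥ 0`, so it is monotone and vanishes at `0`; hence
`sinh (x * t) / sinh x ≤ t`, an even bound in `x`. Together with `cosh ≥ 1` this gives the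
inequality, with equality in the limit `ν → 0`.
-/

open Real

lemma sinh_mul_le_mul_sinh {t : ℝ} (ht0 : 0 ≤ t) (ht1 : t ≤ 1) {x : ℝ} (hx : 0 ≤ x) :
    sinh (x * t) ≤ t * sinh x := by
  set f : ℝ → ℝ := fun y => t * sinh y - sinh (y * t)
  have hf : ∀ y, HasDerivAt f (t * (cosh y - cosh (y * t))) y := fun y => by
    have h := ((hasDerivAt_sinh y).const_mul t).sub (hasDerivAt_mul_const (x := y) t).sinh
    exact h.congr_deriv (by ring)
  have hf_mono : Monotone f := by
    refine monotone_of_deriv_nonneg (fun y => (hf y).differentiableAt) fun y => ?_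
    rw [(hf y).deriv]
    have hcosh : cosh (y * t) ≤ cosh y := by
      rw [cosh_le_cosh, abs_mul, abs_of_nonneg ht0]
      exact mul_le_of_le_one_right (abs_nonneg y) ht1
    exact mul_nonneg ht0 (sub_nonneg.mpr hcosh)
  simpa only [f, zero_mul, sinh_zero, mul_zero, sub_zero, sub_nonneg] using hf_mono hx

lemma sinh_mul_div_sinh_le {t : ℝ} (ht0 : 0 ≤ t) (ht1 : t ≤ 1) (x : ℝ) :
    sinh (x * t) / sinh x ≤ t := by
  wlog hx : 0 ≤ x generalizing x
  · simpa only [neg_mul, sinh_neg, neg_div_neg_eq] using this (-x) (by linarith)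
  rcases hx.eq_or_lt with rfl | hx
  · simpa using ht0 -- the quotient is `0 / 0 = 0` here
  · rw [div_le_iff₀ (sinh_pos_iff.mpr hx)]
    exact sinh_mul_le_mul_sinh ht0 ht1 hx.le

theorem stmt10_general (p : ℝ) (hp0 : 0 ≤ p) (δ : ℝ) (hδ0 : 0 ≤ δ) (hδ1 : δ ≤ 1)
    (ν : ℝ) :
    2 - p * (1 - δ) ≤
      2 * Real.cosh (ν * δ) - p * Real.sinh (ν * (1 - δ)) / Real.sinh ν := by
  have hratio : p * (sinh (ν * (1 - δ)) / sinh ν) ≤ p * (1 - δ) :=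
    mul_le_mul_of_nonneg_left (sinh_mul_div_sinh_le (by linarith) (by linarith) ν) hp0
  have hcosh : 1 ≤ cosh (ν * δ) := one_le_cosh _
  rw [mul_div_assoc]
  linarith

theorem stmt10 (p : ℝ) (hp0 : 0 ≤ p) (hp1 : p ≤ 1) (δ : ℝ) (hδ0 : 0 ≤ δ) (hδ1 : δ ≤ 1)
    (ν : ℝ) (hν : ν ≠ 0) :
    2 - p * (1 - δ) ≤
      2 * Real.cosh (ν * δ) - p * Real.sinh (ν * (1 - δ)) / Real.sinh ν :=
  stmt10_general p hp0 δ hδ0 hδ1 ν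
end

section
/- For every real x > 0, every real p with 0 < p ≤ 1, every real δ with 0 < δ < 1, and every real ν ≠ 0, one has 2·exp(−x·cosh(ν·δ))·cosh(x·sinh(ν·δ)) + exp(−x·(2 − p·(1−δ))) ≥ 2·exp(−x) + exp(−x·g(ν)), where g(ν) = 2·cosh(ν·δ) − p·sinh(ν·(1−δ))/sinh(ν). -/
/-!
Put `t = νδ`, `u = e^{-x e^{-t}}`, `v = e^{-x e^t}`, `w = e^{-x}`, `R = p sinh(ν(1-δ)) / sinh ν`
and `κ = p(1-δ)`. The right-hand side is `u + v + w² e^{xκ}` and the left-hand side is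
`2w + uv e^{xR}`. Since `(1-u)(1-v) ≤ (1-w)²`, `uv ≤ w²` and `R ≤ κ` (convexity of `sinh` on
`[0, ∞)`), this follows from `uv (e^{xR} - 1) ≤ uv (e^{xκ} - 1) ≤ w² (e^{xκ} - 1)`.

The bound `(1-u)(1-v) ≤ (1-w)²` says that `t ↦ (1 - e^{-x e^t})(1 - e^{-x e^{-t}})`, an even
function, peaks at `t = 0`. For `t ≥ 0` its derivative is `e^{-A-B} (B (e^A - 1) - A (e^B - 1))`
with `A = x e^{-t} ≤ B = x e^t`, which is nonpositive because the secant slopes `(e^z - 1) / z`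
of `exp` increase with `z`.
-/

open Real

lemma mul_exp_sub_one_le_mul_exp_sub_one {A B : ℝ} (hA : 0 < A) (hAB : A ≤ B) :
    B * (exp A - 1) ≤ A * (exp B - 1) := by
  have hB : 0 < B := hA.trans_le hAB
  have h := convexOn_exp.secant_mono (Set.mem_univ 0) (Set.mem_univ A) (Set.mem_univ B)
    hA.ne' hB.ne' hAB
  rw [exp_zero, sub_zero, sub_zero, div_le_div_iff₀ hA hB] at h
  linarith

lemma mul_exp_neg_mul_one_sub_exp_neg_le {A B : ℝ} (hA : 0 < A) (hAB : A ≤ B) :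
    B * exp (-B) * (1 - exp (-A)) ≤ A * exp (-A) * (1 - exp (-B)) := by
  have h := mul_le_mul_of_nonneg_right (mul_exp_sub_one_le_mul_exp_sub_one hA hAB)
    (exp_pos (-A - B)).le
  have hA' : exp A * exp (-A - B) = exp (-B) := by rw [← exp_add]; congr 1; ring
  have hB' : exp B * exp (-A - B) = exp (-A) := by rw [← exp_add]; congr 1; ring
  have hAB' : exp (-A - B) = exp (-A) * exp (-B) := by rw [sub_eq_add_neg, exp_add]
  linear_combination h - B * hA' + B * hAB' + A * hB' - A * hAB'

lemma hasDerivAt_one_sub_exp_neg_mul_exp (x t : ℝ) :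
    HasDerivAt (fun t => 1 - exp (-(x * exp t))) (x * exp t * exp (-(x * exp t))) t :=
  (((hasDerivAt_exp t).const_mul x).fun_neg.exp.const_sub 1).congr_deriv (by ring)

lemma one_sub_exp_neg_mul_exp_mul_le (x : ℝ) (hx : 0 < x) (t : ℝ) :
    (1 - exp (-(x * exp t))) * (1 - exp (-(x * exp (-t)))) ≤ (1 - exp (-x)) ^ 2 := by
  set F : ℝ → ℝ := fun t => (1 - exp (-(x * exp t))) * (1 - exp (-(x * exp (-t))))
  have hF : ∀ t, HasDerivAt F (x * exp t * exp (-(x * exp t)) * (1 - exp (-(x * exp (-t))))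
      - (1 - exp (-(x * exp t))) * (x * exp (-t) * exp (-(x * exp (-t))))) t := by
    intro t
    exact ((hasDerivAt_one_sub_exp_neg_mul_exp x t).fun_mul
      ((hasDerivAt_one_sub_exp_neg_mul_exp x (-t)).comp t (hasDerivAt_neg t))).congr_deriv
      (by simp only [Function.comp_apply]; ring)
  have hanti : AntitoneOn F (Set.Ici 0) := by
    refine antitoneOn_of_hasDerivWithinAt_nonpos (convex_Ici 0)
      (fun t _ => (hF t).continuousAt.continuousWithinAt)
      (fun t _ => (hF t).hasDerivWithinAt) fun t ht => ?_
    rw [interior_Ici, Set.mem_Ioi] at ht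
    have hle : x * exp (-t) ≤ x * exp t := by gcongr; linarith
    linarith [mul_exp_neg_mul_one_sub_exp_neg_le (by positivity) hle]
  have heven : F |t| = F t := by
    rcases abs_choice t with h | h <;> simp only [F, h, neg_neg, mul_comm]
  have h0 : F 0 = (1 - exp (-x)) ^ 2 := by simp [F, sq]
  simpa only [heven, h0] using hanti Set.self_mem_Ici (abs_nonneg t) (abs_nonneg t)

lemma two_mul_exp_neg_mul_cosh_mul_cosh (x t : ℝ) :
    2 * exp (-x * cosh t) * cosh (x * sinh t) = exp (-(x * exp (-t))) + exp (-(x * exp t)) := by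
  have hs : exp (-x * cosh t) * exp (x * sinh t) = exp (-(x * exp (-t))) := by
    rw [← exp_add, cosh_eq, sinh_eq]; congr 1; ring
  have hc : exp (-x * cosh t) * exp (-(x * sinh t)) = exp (-(x * exp t)) := by
    rw [← exp_add, cosh_eq, sinh_eq]; congr 1; ring
  rw [cosh_eq (x * sinh t)]
  linear_combination hs + hc

lemma convexOn_sinh : ConvexOn ℝ (Set.Ici 0) sinh := by
  refine MonotoneOn.convexOn_of_deriv (convex_Ici 0) continuous_sinh.continuousOn
    differentiable_sinh.differentiableOn ?_
  rw [Real.deriv_sinh, interior_Ici]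
  intro a ha b hb hab
  rw [cosh_le_cosh, abs_of_pos ha, abs_of_pos hb]
  exact hab

lemma sinh_mul_le_mul_sinh_s11 {ν l : ℝ} (hν : 0 ≤ ν) (hl0 : 0 ≤ l) (hl1 : l ≤ 1) :
    sinh (ν * l) ≤ l * sinh ν := by
  have h := convexOn_sinh.2 (Set.mem_Ici.2 hν) Set.self_mem_Ici hl0 (sub_nonneg.2 hl1)
    (add_sub_cancel l 1)
  simpa [mul_comm] using h

lemma sinh_mul_div_sinh_le_s11 {ν l : ℝ} (hν : ν ≠ 0) (hl0 : 0 ≤ l) (hl1 : l ≤ 1) :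
    sinh (ν * l) / sinh ν ≤ l := by
  wlog hpos : 0 < ν generalizing ν
  · have h := this (neg_ne_zero.2 hν) (by linarith [hν.lt_of_le (not_lt.1 hpos)])
    rwa [neg_mul, sinh_neg, sinh_neg, neg_div_neg_eq] at h
  rw [div_le_iff₀ (sinh_pos_iff.2 hpos)]
  exact sinh_mul_le_mul_sinh_s11 hpos.le hl0 hl1

lemma two_mul_exp_neg_add_exp_le {x : ℝ} (hx : 0 < x) (t : ℝ) {R κ : ℝ} (hRκ : R ≤ κ)
    (hκ : 0 ≤ κ) :
    2 * exp (-x) + exp (-x * (2 * cosh t - R)) ≤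
      2 * exp (-x * cosh t) * cosh (x * sinh t) + exp (-x * (2 - κ)) := by
  rw [two_mul_exp_neg_mul_cosh_mul_cosh]
  have hcore := one_sub_exp_neg_mul_exp_mul_le x hx t
  set u := exp (-(x * exp (-t)))
  set v := exp (-(x * exp t))
  set w := exp (-x)
  have huv : exp (-x * (2 * cosh t - R)) = u * v * exp (x * R) := by
    rw [← exp_add, ← exp_add, cosh_eq]; congr 1; ring
  have hw : exp (-x * (2 - κ)) = w ^ 2 * exp (x * κ) := by
    rw [sq, ← exp_add, ← exp_add]; congr 1; ring
  have huv_le : u * v ≤ w ^ 2 := by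
    rw [sq, ← exp_add, ← exp_add, exp_le_exp]
    have h := mul_le_mul_of_nonneg_left (one_le_cosh t) hx.le
    rw [cosh_eq] at h
    linarith
  have hRκ' : exp (x * R) ≤ exp (x * κ) := exp_le_exp.2 (by gcongr)
  have hκ' : 1 ≤ exp (x * κ) := one_le_exp (by positivity)
  have huv_pos : 0 < u * v := by positivity
  rw [huv, hw]
  nlinarith [mul_nonneg huv_pos.le (sub_nonneg.2 hRκ'),
    mul_nonneg (sub_nonneg.2 huv_le) (sub_nonneg.2 hκ')]

theorem stmt11_general (x : ℝ) (hx : 0 < x) (p : ℝ) (hp0 : 0 < p)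
    (δ : ℝ) (hδ0 : 0 < δ) (hδ1 : δ < 1) (ν : ℝ) (hν : ν ≠ 0) :
    2 * Real.exp (-x) +
        Real.exp (-x * (2 * Real.cosh (ν * δ) -
          p * Real.sinh (ν * (1 - δ)) / Real.sinh ν)) ≤
      2 * Real.exp (-x * Real.cosh (ν * δ)) * Real.cosh (x * Real.sinh (ν * δ)) +
        Real.exp (-x * (2 - p * (1 - δ))) := by
  have hR : p * sinh (ν * (1 - δ)) / sinh ν ≤ p * (1 - δ) := by
    rw [mul_div_assoc]
    exact mul_le_mul_of_nonneg_left (sinh_mul_div_sinh_le_s11 hν (by linarith) (by linarith)) hp0.le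
  exact two_mul_exp_neg_add_exp_le hx (ν * δ) hR (mul_nonneg hp0.le (by linarith))

theorem stmt11 (x : ℝ) (hx : 0 < x) (p : ℝ) (hp0 : 0 < p) (hp1 : p ≤ 1)
    (δ : ℝ) (hδ0 : 0 < δ) (hδ1 : δ < 1) (ν : ℝ) (hν : ν ≠ 0) :
    2 * Real.exp (-x) +
        Real.exp (-x * (2 * Real.cosh (ν * δ) -
          p * Real.sinh (ν * (1 - δ)) / Real.sinh ν)) ≤
      2 * Real.exp (-x * Real.cosh (ν * δ)) * Real.cosh (x * Real.sinh (ν * δ)) +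
        Real.exp (-x * (2 - p * (1 - δ))) :=
  stmt11_general x hx p hp0 δ hδ0 hδ1 ν hν
end

section
/- For every real Δ > 0, every real p with 0 < p ≤ 1, and every real δ with 0 < δ < 1, one has (1 − exp(−Δ·p·(1 − p·(1−δ)))) / (exp(Δ·p) − 1) < 1 − p·(1−δ). -/
open Real

/-- Both sides are compared with `x * c`, using `1 + t < exp t` once at `t = -(x * c)` and once
at `t = x`. -/
theorem one_sub_exp_neg_mul_div_exp_sub_one_lt {x c : ℝ} (hx : 0 < x) (hc : 0 < c) :
    (1 - exp (-(x * c))) / (exp x - 1) < c := by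
  have hxc : 0 < x * c := mul_pos hx hc
  have h_num : 1 - exp (-(x * c)) < x * c := by
    linarith [one_sub_lt_exp_neg hxc.ne']
  have h_den : x < exp x - 1 := by
    linarith [add_one_lt_exp hx.ne']
  rw [div_lt_iff₀ (hx.trans h_den)]
  calc 1 - exp (-(x * c)) < x * c := h_num
    _ < c * (exp x - 1) := by rw [mul_comm]; exact mul_lt_mul_of_pos_left h_den hc

theorem stmt12_general (Δ : ℝ) (hΔ : 0 < Δ) (p : ℝ) (hp0 : 0 < p) (hp1 : p ≤ 1)
    (δ : ℝ) (hδ0 : 0 < δ) :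
    (1 - Real.exp (-Δ * p * (1 - p * (1 - δ)))) / (Real.exp (Δ * p) - 1) <
      1 - p * (1 - δ) := by
  have hc : 0 < 1 - p * (1 - δ) := by nlinarith
  rw [show -Δ * p * (1 - p * (1 - δ)) = -(Δ * p * (1 - p * (1 - δ))) by ring]
  exact one_sub_exp_neg_mul_div_exp_sub_one_lt (mul_pos hΔ hp0) hc

theorem stmt12 (Δ : ℝ) (hΔ : 0 < Δ) (p : ℝ) (hp0 : 0 < p) (hp1 : p ≤ 1)
    (δ : ℝ) (hδ0 : 0 < δ) (hδ1 : δ < 1) :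
    (1 - Real.exp (-Δ * p * (1 - p * (1 - δ)))) / (Real.exp (Δ * p) - 1) <
      1 - p * (1 - δ) :=
  stmt12_general Δ hΔ p hp0 hp1 δ hδ0
end

section
/- For every real β with 0 < β < 1, the series ∑_{n=0}^∞ [ ∑_{k=0}^n (−1)^k · (n choose k) · 1/(1 + k·β) ] converges and its sum equals 1/(1 − β). -/
open Real Filter Finset
open scoped Nat Topology fwdDiff

/-!
Up to the factor `(-1)ⁿ`, the sum `∑ₖ (-1)ᵏ (n choose k) / (x + k)` is the `n`-th forward
difference of `k ↦ (x + k)⁻¹` at `0`, which is `(-1)ⁿ n! / ∏_{j ≤ n} (x + j)`. With `x = β⁻¹` the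
`n`-th term of the series becomes `tₙ / (1 + nβ)`, where `tₙ = ∏_{j<n} (j + 1)β / (1 + jβ)`.
From `tₙ₊₁ = tₙ (n + 1)β / (1 + nβ)` one gets `(1 - β) tₙ / (1 + nβ) = tₙ - tₙ₊₁`, so the
partial sums telescope to `(1 - t_N) / (1 - β)`. Finally `t_N → 0`: each factor is at most
`1 - (1 - β) / (j + 1) ≤ exp (-(1 - β) / (j + 1))` and the harmonic series diverges.
-/

section Field

variable {𝕜 : Type*} [Field 𝕜] {x : 𝕜}

lemma fwdDiff_iter_inv_add (hx : ∀ k : ℕ, x + k ≠ 0) (n m : ℕ) :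
    (Δ_[1])^[n] (fun k : ℕ ↦ (x + k)⁻¹) m =
      (-1) ^ n * n ! / ∏ j ∈ range (n + 1), (x + m + j) := by
  induction n generalizing m with
  | zero => simp
  | succ n ih =>
    have hprod : ∀ (i : ℕ) l, ∏ j ∈ range l, (x + i + j) ≠ 0 :=
      fun i l ↦ prod_ne_zero_iff.mpr fun j _ ↦ by simpa [add_assoc] using hx (i + j)
    have hfirst : ∏ j ∈ range (n + 1 + 1), (x + m + j) =
        (∏ j ∈ range (n + 1), (x + ↑(m + 1) + j)) * (x + m) := by
      rw [prod_range_succ']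
      push_cast
      ring_nf
    have hlast : ∏ j ∈ range (n + 1 + 1), (x + m + j) =
        (∏ j ∈ range (n + 1), (x + m + j)) * (x + m + ↑(n + 1)) :=
      prod_range_succ _ _
    rw [Function.iterate_succ_apply', fwdDiff, ih, ih, div_sub_div _ _ (hprod _ _) (hprod _ _),
      div_eq_div_iff (mul_ne_zero (hprod _ _) (hprod _ _)) (hprod _ _)]
    push_cast [Nat.factorial_succ] at hfirst hlast ⊢
    linear_combination ((-1) ^ n * n ! * ∏ j ∈ range (n + 1), (x + m + j)) * hfirst -
      ((-1) ^ n * n ! * ∏ j ∈ range (n + 1), (x + (m + 1) + j)) * hlast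

theorem sum_range_neg_one_pow_mul_choose_div_add (hx : ∀ k : ℕ, x + k ≠ 0) (n : ℕ) :
    ∑ k ∈ range (n + 1), (-1) ^ k * n.choose k / (x + k) = n ! / ∏ j ∈ range (n + 1), (x + j) := by
  have h := fwdDiff_iter_inv_add hx n 0
  rw [fwdDiff_iter_eq_sum_shift] at h
  simp only [zero_add, smul_eq_mul, mul_one, Nat.cast_zero, add_zero] at h
  have hsign : ∀ k ∈ range (n + 1), (-1 : 𝕜) ^ n * (-1) ^ (n - k) = (-1) ^ k := fun k hk ↦ by
    rw [← pow_add, show n + (n - k) = k + 2 * (n - k) by grind, pow_add, pow_mul]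
    simp
  calc ∑ k ∈ range (n + 1), (-1) ^ k * n.choose k / (x + k)
      = (-1) ^ n * ∑ k ∈ range (n + 1), ((-1) ^ (n - k) * n.choose k : ℤ) • (x + k)⁻¹ := by
        rw [mul_sum]
        refine sum_congr rfl fun k hk ↦ ?_
        simp only [zsmul_eq_mul, Int.cast_mul, Int.cast_pow, Int.cast_neg, Int.cast_one,
          Int.cast_natCast, ← mul_assoc, hsign k hk, div_eq_mul_inv]
    _ = n ! / ∏ j ∈ range (n + 1), (x + j) := by
        rw [h, ← mul_div_assoc, ← mul_assoc, ← pow_add, ← two_mul, pow_mul]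
        simp

end Field

theorem tendsto_prod_range_zero_of_le_one_sub {r a : ℕ → ℝ} (hr : ∀ j, 0 ≤ r j)
    (hra : ∀ j, r j ≤ 1 - a j) (ha : Tendsto (fun N ↦ ∑ j ∈ range N, a j) atTop atTop) :
    Tendsto (fun N ↦ ∏ j ∈ range N, r j) atTop (𝓝 0) := by
  have hexp : Tendsto (fun N ↦ exp (-∑ j ∈ range N, a j)) atTop (𝓝 0) :=
    tendsto_exp_atBot.comp (tendsto_neg_atTop_atBot.comp ha)
  refine tendsto_of_tendsto_of_tendsto_of_le_of_le tendsto_const_nhds hexp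
    (fun N ↦ prod_nonneg fun j _ ↦ hr j) fun N ↦ ?_
  rw [← sum_neg_distrib, exp_sum]
  exact prod_le_prod (fun j _ ↦ hr j) fun j _ ↦ (hra j).trans <| by
    linarith [add_one_le_exp (-a j)]

noncomputable def factorialRatio (β : ℝ) (n : ℕ) : ℝ :=
  ∏ j ∈ range n, ((j + 1) * β / (1 + j * β))

lemma factorialRatio_succ (β : ℝ) (n : ℕ) :
    factorialRatio β (n + 1) = factorialRatio β n * ((n + 1) * β / (1 + n * β)) :=
  prod_range_succ _ _

lemma factorialRatio_eq_factorial_mul_pow_div (β : ℝ) (n : ℕ) :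
    factorialRatio β n = n ! * β ^ n / ∏ j ∈ range n, (1 + j * β) := by
  rw [factorialRatio, prod_div_distrib, prod_mul_distrib, prod_const, card_range,
    ← prod_range_add_one_eq_factorial]
  push_cast
  rfl

section Real

variable {β : ℝ}

lemma sum_range_neg_one_pow_mul_choose_div_one_add_mul (hβ : 0 < β) (n : ℕ) :
    ∑ k ∈ range (n + 1), (-1) ^ k * (n.choose k : ℝ) * (1 / (1 + k * β)) =
      factorialRatio β n / (1 + n * β) := by
  have hx : ∀ k : ℕ, β⁻¹ + k ≠ 0 := fun k ↦ by positivity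
  have hprod : ∏ j ∈ range (n + 1), (β⁻¹ + j) =
      (∏ j ∈ range (n + 1), (1 + j * β)) / β ^ (n + 1) := by
    have hterm : ∀ j ∈ range (n + 1), β⁻¹ + (j : ℝ) = (1 + j * β) / β := fun j _ ↦ by field_simp
    rw [prod_congr rfl hterm, prod_div_distrib, prod_const, card_range]
  calc ∑ k ∈ range (n + 1), (-1) ^ k * (n.choose k : ℝ) * (1 / (1 + k * β))
      = β⁻¹ * ∑ k ∈ range (n + 1), (-1) ^ k * n.choose k / (β⁻¹ + k) := by
        rw [mul_sum]
        refine sum_congr rfl fun k _ ↦ ?_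
        field_simp
    _ = factorialRatio β n / (1 + n * β) := by
        rw [sum_range_neg_one_pow_mul_choose_div_add hx, hprod, prod_range_succ,
          factorialRatio_eq_factorial_mul_pow_div]
        field_simp
        ring

lemma one_sub_mul_sum_range_factorialRatio (hβ : 0 ≤ β) (N : ℕ) :
    (1 - β) * ∑ n ∈ range N, factorialRatio β n / (1 + n * β) = 1 - factorialRatio β N := by
  have hstep : ∀ n : ℕ, (1 - β) * (factorialRatio β n / (1 + n * β)) =
      factorialRatio β n - factorialRatio β (n + 1) := fun n ↦ by
    rw [factorialRatio_succ]
    field_simp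
    ring
  rw [mul_sum, sum_congr rfl fun n _ ↦ hstep n, sum_range_sub']
  simp [factorialRatio]

lemma tendsto_factorialRatio (hβ0 : 0 ≤ β) (hβ1 : β < 1) :
    Tendsto (factorialRatio β) atTop (𝓝 0) := by
  refine tendsto_prod_range_zero_of_le_one_sub (a := fun j ↦ (1 - β) * (1 / (j + 1)))
    (fun j ↦ by positivity) (fun j ↦ ?_) ?_
  · have hj : (0 : ℝ) ≤ j := j.cast_nonneg
    have hrhs : 1 - (1 - β) * (1 / (j + 1)) = (j + β) / (j + 1) := by
      field_simp
      ring
    rw [hrhs, div_le_div_iff₀ (by positivity) (by positivity)]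
    nlinarith [mul_nonneg hj (sq_nonneg (1 - β))]
  · simpa only [mul_sum] using
      tendsto_sum_range_one_div_nat_succ_atTop.const_mul_atTop (sub_pos.mpr hβ1)

end Real

theorem stmt14 (β : ℝ) (hβ0 : 0 < β) (hβ1 : β < 1) :
    Tendsto
      (fun N : ℕ => ∑ n ∈ Finset.range N,
        ∑ k ∈ Finset.range (n + 1), (-1 : ℝ) ^ k * (n.choose k : ℝ) * (1 / (1 + k * β)))
      atTop (nhds (1 / (1 - β))) := by
  have hpartial : ∀ N : ℕ, ∑ n ∈ range N,
      ∑ k ∈ range (n + 1), (-1 : ℝ) ^ k * (n.choose k : ℝ) * (1 / (1 + k * β)) =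
        (1 - factorialRatio β N) / (1 - β) := fun N ↦ by
    rw [eq_div_iff (sub_ne_zero.mpr hβ1.ne'), mul_comm,
      ← one_sub_mul_sum_range_factorialRatio hβ0.le]
    simp only [sum_range_neg_one_pow_mul_choose_div_one_add_mul hβ0]
  simp only [hpartial]
  simpa using ((tendsto_factorialRatio hβ0.le hβ1).const_sub 1).div_const (1 - β)
end

section
/- Fix an integer n ≥ 1. For every fixed real δ with 0 ≤ δ ≤ 1, the function p ↦ D_n(p,δ) is monotone nondecreasing and concave on [0,1]; and for every fixed real p with 0 ≤ p ≤ 1, the function δ ↦ D_n(p,δ) is monotone nondecreasing and convex on [0,1], increasing from 1 − (1−p)^n at δ = 0 to n·p at δ = 1. -/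
/-!
Write `D_n(p,δ) = ∑ₖ C(n,k) aₖ pᵏ` with `aₖ = C(δ-1,k-1) = C(δ,k) - C(δ-1,k)` (generalized binomial
coefficients). Passing to the Bernstein basis `C(n,j) pʲ (1-p)ⁿ⁻ʲ` replaces the coefficients by
`bⱼ = ∑ᵢ C(j,i) aᵢ`, and for sequences of the form `i ↦ C(x,i+r)` Chu–Vandermonde gives
`bⱼ = C(x+j,j+r)`. Hence `D_n = ∑ⱼ C(n,j+1) pʲ⁺¹ (1-p)ⁿ⁻ʲ⁻¹ C(δ+j,j)`, and
`C(δ+j,j) = (δ+1)⋯(δ+j)/j!` is nonnegative, increasing and convex in `δ ≥ -1`, which gives the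
statements in `δ`. In `p`, the first two derivatives are `n ∑ᵢ C(n-1,i) C(δ-1,i) pⁱ` and
`n(n-1) ∑ᵢ C(n-2,i) C(δ-1,i+1) pⁱ`, whose Bernstein coefficients `C(δ-1+j,j) ≥ 0` and
`C(δ-1+j,j+1) ≤ 0` have constant signs for `0 ≤ δ ≤ 1`.
-/

open Real Set

open Finset Polynomial

theorem Ring.choose_eq_descPochhammer_eval_div {K : Type*} [Field K] [CharZero K] (x : K)
    (k : ℕ) :
    Ring.choose x k = (descPochhammer K k).eval x / k.factorial := by
  rw [Ring.choose_eq_smul, ← aeval_eq_smeval, aeval_def, ← eval_map, descPochhammer_map,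
    smul_eq_mul, inv_mul_eq_div]

theorem Ring.choose_eq_prod_range_div {K : Type*} [Field K] [CharZero K] (x : K) (k : ℕ) :
    Ring.choose x k = (∏ l ∈ range k, (x - l)) / k.factorial := by
  rw [Ring.choose_eq_descPochhammer_eval_div, descPochhammer_eval_eq_prod_range]

theorem sum_antidiagonal_mul_choose {M : Type*} [CommSemiring M] (a : ℕ → M) (j : ℕ) :
    ∑ q ∈ antidiagonal j, a q.1 * (j.choose q.2 : M) =
      ∑ i ∈ range (j + 1), (j.choose i : M) * a i := by
  rw [Nat.sum_antidiagonal_eq_sum_range_succ_mk]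
  refine sum_congr rfl fun i hi => ?_
  rw [Nat.choose_symm (Nat.lt_succ_iff.mp (mem_range.mp hi)), mul_comm]

theorem prod_Icc_one_sub_natCast {R : Type*} [CommRing R] (x : R) (k : ℕ) :
    ∏ j ∈ Icc 1 k, (x - j) = ∏ l ∈ range k, (x - 1 - l) := by
  rw [← Finset.Ico_add_one_right_eq_Icc, prod_Ico_eq_prod_range, Nat.add_sub_cancel]
  refine prod_congr rfl fun l _ => ?_
  push_cast
  ring

section BinomialRing

variable {R : Type*} [CommRing R] [BinomialRing R]

theorem Ring.choose_add_natCast_eq_sum_antidiagonal (x : R) (j k : ℕ) :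
    Ring.choose (x + j) k = ∑ q ∈ antidiagonal k, Ring.choose x q.1 * (j.choose q.2 : R) := by
  simp only [Ring.add_choose_eq k (Commute.all x (j : R)), Ring.choose_natCast]

theorem Ring.sum_choose_mul_choose (x : R) (j : ℕ) :
    ∑ i ∈ range (j + 1), (j.choose i : R) * Ring.choose x i = Ring.choose (x + j) j := by
  rw [Ring.choose_add_natCast_eq_sum_antidiagonal, sum_antidiagonal_mul_choose]

theorem Ring.sum_choose_mul_choose_succ (x : R) (j : ℕ) :
    ∑ i ∈ range (j + 1), (j.choose i : R) * Ring.choose x (i + 1) =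
      Ring.choose (x + j) (j + 1) := by
  rw [Ring.choose_add_natCast_eq_sum_antidiagonal, Nat.sum_antidiagonal_succ,
    Nat.choose_succ_self, Nat.cast_zero, mul_zero, zero_add,
    sum_antidiagonal_mul_choose (fun i => Ring.choose x (i + 1))]

theorem Ring.choose_sub_choose_sub_one_succ (x : R) (k : ℕ) :
    Ring.choose x (k + 1) - Ring.choose (x - 1) (k + 1) = Ring.choose (x - 1) k := by
  rw [← sub_add_cancel x 1, Ring.choose_succ_succ, add_sub_cancel_right, add_sub_cancel_right]

end BinomialRing

theorem sum_choose_mul_pow_eq_sum_bernstein {R : Type*} [CommRing R] (m : ℕ) (a : ℕ → R)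
    (p : R) :
    ∑ i ∈ range (m + 1), (m.choose i : R) * a i * p ^ i =
      ∑ j ∈ range (m + 1), (m.choose j : R) * (∑ i ∈ range (j + 1), (j.choose i : R) * a i) *
        p ^ j * (1 - p) ^ (m - j) := by
  let g : ℕ → ℕ → R := fun i k =>
    (m.choose i : R) * a i * (((m - i).choose k : R) * p ^ (i + k) * (1 - p) ^ (m - i - k))
  calc ∑ i ∈ range (m + 1), (m.choose i : R) * a i * p ^ i
      = ∑ i ∈ range (m + 1), ∑ k ∈ range (m + 1 - i), g i k := by
        refine sum_congr rfl fun i hi => ?_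
        have hi : i ≤ m := Nat.lt_succ_iff.mp (mem_range.mp hi)
        have hbin := (add_pow p (1 - p) (m - i)).symm
        rw [add_sub_cancel, one_pow] at hbin
        conv_lhs => rw [← mul_one ((m.choose i : R) * a i * p ^ i), ← hbin, mul_sum]
        rw [Nat.sub_add_comm hi]
        exact sum_congr rfl fun k _ => by ring
    _ = ∑ j ∈ range (m + 1), ∑ i ∈ range (j + 1), g i (j - i) :=
        (sum_range_diag_flip _ g).symm
    _ = _ := by
        refine sum_congr rfl fun j hj => ?_
        rw [mul_sum, sum_mul, sum_mul]
        refine sum_congr rfl fun i hi => ?_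
        have hi : i ≤ j := Nat.lt_succ_iff.mp (mem_range.mp hi)
        have hchoose : (m.choose j : R) * j.choose i = m.choose i * (m - i).choose (j - i) := by
          rw [← Nat.cast_mul, ← Nat.cast_mul, Nat.choose_mul hi]
        simp only [g, Nat.add_sub_cancel' hi, Nat.sub_sub]
        linear_combination -(a i * p ^ j * (1 - p) ^ (m - j)) * hchoose

theorem convexOn_sum {ι 𝕜 E β : Type*} [Semiring 𝕜] [PartialOrder 𝕜] [AddCommMonoid E]
    [AddCommMonoid β] [PartialOrder β] [IsOrderedAddMonoid β] [SMul 𝕜 E] [DistribMulAction 𝕜 β]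
    {s : Set E} (hs : Convex 𝕜 s) {t : Finset ι} {f : ι → E → β}
    (h : ∀ i ∈ t, ConvexOn 𝕜 s (f i)) : ConvexOn 𝕜 s (fun x => ∑ i ∈ t, f i x) :=
  ⟨hs, fun _ hx _ hy _ _ ha hb hab => by
    simp only [smul_sum, ← sum_add_distrib]
    exact sum_le_sum fun i hi => (h i hi).2 hx hy ha hb hab⟩

theorem Ring.choose_add_natCast_self_eq (x : ℝ) (j : ℕ) :
    Ring.choose (x + j) j = (j.factorial : ℝ)⁻¹ * (descPochhammer ℝ j).eval (x + j) := by
  rw [Ring.choose_eq_descPochhammer_eval_div, inv_mul_eq_div]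

theorem Ring.choose_add_natCast_self_nonneg {x : ℝ} (hx : -1 ≤ x) (j : ℕ) :
    0 ≤ Ring.choose (x + j) j := by
  rw [Ring.choose_add_natCast_self_eq]
  exact mul_nonneg (by positivity) (descPochhammer_nonneg (by linarith))

theorem Ring.choose_add_natCast_succ_nonpos {x : ℝ} (hx₀ : -1 ≤ x) (hx₁ : x ≤ 0) (j : ℕ) :
    Ring.choose (x + j) (j + 1) ≤ 0 := by
  rw [Ring.choose_eq_descPochhammer_eval_div, descPochhammer_succ_eval, add_sub_cancel_right]
  exact div_nonpos_of_nonpos_of_nonneg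
    (mul_nonpos_of_nonneg_of_nonpos (descPochhammer_nonneg (by linarith)) hx₁) (by positivity)

theorem Ring.monotoneOn_choose_add_natCast_self (j : ℕ) :
    MonotoneOn (fun x : ℝ => Ring.choose (x + j) j) (Ici (-1)) := by
  intro x hx y hy hxy
  simp only [Ring.choose_add_natCast_self_eq]
  gcongr
  refine monotoneOn_descPochhammer_eval j ?_ ?_ (by linarith)
  all_goals simp only [Set.mem_Ici] at *; linarith

theorem Ring.convexOn_choose_add_natCast_self (j : ℕ) :
    ConvexOn ℝ (Ici (-1)) (fun x : ℝ => Ring.choose (x + j) j) := by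
  have h := (convexOn_descPochhammer_eval j).translate_right (j : ℝ)
  rw [preimage_const_add_Ici, sub_sub_cancel_left] at h
  refine (h.smul (c := (j.factorial : ℝ)⁻¹) (by positivity)).congr fun x _ => ?_
  simp [Ring.choose_add_natCast_self_eq, add_comm]

noncomputable def binomSum (m : ℕ) (a : ℕ → ℝ) (p : ℝ) : ℝ :=
  ∑ i ∈ range (m + 1), (m.choose i : ℝ) * a i * p ^ i

theorem hasDerivAt_binomSum (m : ℕ) (a : ℕ → ℝ) (p : ℝ) :
    HasDerivAt (binomSum m a) (m * binomSum (m - 1) (fun i => a (i + 1)) p) p := by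
  cases m with
  | zero =>
    have hconst : binomSum 0 a = fun _ => a 0 := by ext; simp [binomSum]
    simpa [hconst] using hasDerivAt_const p (a 0)
  | succ m =>
    have hshift : binomSum (m + 1) a = fun q =>
        a 0 + ∑ i ∈ range (m + 1), ((m + 1).choose (i + 1) : ℝ) * a (i + 1) * q ^ (i + 1) := by
      ext q
      rw [binomSum, sum_range_succ', add_comm]
      simp
    rw [hshift]
    refine (HasDerivAt.fun_sum fun i _ => ((hasDerivAt_pow (i + 1) p).const_mul
      (((m + 1).choose (i + 1) : ℝ) * a (i + 1)))).const_add (a 0) |>.congr_deriv ?_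
    simp only [binomSum, Nat.add_sub_cancel, mul_sum]
    refine sum_congr rfl fun i _ => ?_
    have hchoose :
        ((m + 1 : ℕ) : ℝ) * m.choose i = (m + 1).choose (i + 1) * (i + 1 : ℕ) := by
      exact_mod_cast Nat.add_one_mul_choose_eq m i
    push_cast at hchoose ⊢
    linear_combination (a (i + 1) * p ^ i) * hchoose.symm

theorem binomSum_nonneg {m : ℕ} {a : ℕ → ℝ} {p : ℝ}
    (ha : ∀ j, 0 ≤ ∑ i ∈ range (j + 1), (j.choose i : ℝ) * a i) (hp₀ : 0 ≤ p) (hp₁ : p ≤ 1) :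
    0 ≤ binomSum m a p := by
  rw [binomSum, sum_choose_mul_pow_eq_sum_bernstein]
  have hq : 0 ≤ 1 - p := sub_nonneg.mpr hp₁
  exact sum_nonneg fun j _ => by have := ha j; positivity

theorem binomSum_nonpos {m : ℕ} {a : ℕ → ℝ} {p : ℝ}
    (ha : ∀ j, ∑ i ∈ range (j + 1), (j.choose i : ℝ) * a i ≤ 0) (hp₀ : 0 ≤ p) (hp₁ : p ≤ 1) :
    binomSum m a p ≤ 0 := by
  rw [binomSum, sum_choose_mul_pow_eq_sum_bernstein]
  have hq : 0 ≤ 1 - p := sub_nonneg.mpr hp₁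
  refine sum_nonpos fun j _ => mul_nonpos_of_nonpos_of_nonneg
    (mul_nonpos_of_nonpos_of_nonneg ?_ (by positivity)) (by positivity)
  exact mul_nonpos_of_nonneg_of_nonpos (Nat.cast_nonneg _) (ha j)

theorem divPoly_eq_binomSum (n : ℕ) (p δ : ℝ) :
    divPoly n p δ = binomSum n (fun k => Ring.choose δ k - Ring.choose (δ - 1) k) p := by
  rw [divPoly, binomSum, sum_range_succ', ← Finset.Ico_add_one_right_eq_Icc,
    sum_Ico_eq_sum_range, Nat.add_sub_cancel]
  simp only [Ring.choose_zero_right, sub_self, mul_zero, zero_mul, add_zero]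
  refine sum_congr rfl fun k _ => ?_
  rw [add_comm 1 k, Nat.add_sub_cancel, prod_Icc_one_sub_natCast,
    Ring.choose_sub_choose_sub_one_succ, Ring.choose_eq_prod_range_div]

theorem hasDerivAt_divPoly (n : ℕ) (p δ : ℝ) :
    HasDerivAt (fun q => divPoly n q δ) (n * binomSum (n - 1) (Ring.choose (δ - 1)) p) p := by
  have h := hasDerivAt_binomSum n (fun k => Ring.choose δ k - Ring.choose (δ - 1) k) p
  simp only [Ring.choose_sub_choose_sub_one_succ] at h
  simpa only [divPoly_eq_binomSum] using h

theorem monotoneOn_divPoly_p (n : ℕ) {δ : ℝ} (hδ : 0 ≤ δ) :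
    MonotoneOn (fun p => divPoly n p δ) (Icc 0 1) := by
  refine monotoneOn_of_hasDerivWithinAt_nonneg (convex_Icc 0 1)
    (fun p _ => (hasDerivAt_divPoly n p δ).continuousAt.continuousWithinAt)
    (fun p _ => (hasDerivAt_divPoly n p δ).hasDerivWithinAt) fun p hp => ?_
  rw [interior_Icc] at hp
  refine mul_nonneg (Nat.cast_nonneg n) (binomSum_nonneg (fun j => ?_) hp.1.le hp.2.le)
  rw [Ring.sum_choose_mul_choose]
  exact Ring.choose_add_natCast_self_nonneg (by linarith) j

theorem concaveOn_divPoly_p (n : ℕ) {δ : ℝ} (hδ₀ : 0 ≤ δ) (hδ₁ : δ ≤ 1) :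
    ConcaveOn ℝ (Icc 0 1) (fun p => divPoly n p δ) := by
  refine concaveOn_of_hasDerivWithinAt2_nonpos (convex_Icc 0 1)
    (fun p _ => (hasDerivAt_divPoly n p δ).continuousAt.continuousWithinAt)
    (fun p _ => (hasDerivAt_divPoly n p δ).hasDerivWithinAt)
    (fun p _ => ((hasDerivAt_binomSum _ _ p).const_mul (n : ℝ)).hasDerivWithinAt)
    fun p hp => ?_
  rw [interior_Icc] at hp
  refine mul_nonpos_of_nonneg_of_nonpos (Nat.cast_nonneg n) (mul_nonpos_of_nonneg_of_nonpos
    (Nat.cast_nonneg _) (binomSum_nonpos (fun j => ?_) hp.1.le hp.2.le))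
  rw [Ring.sum_choose_mul_choose_succ]
  exact Ring.choose_add_natCast_succ_nonpos (by linarith) (by linarith) j

theorem divPoly_eq_sum_bernstein (n : ℕ) (p δ : ℝ) :
    divPoly n p δ = ∑ j ∈ range n,
      (n.choose (j + 1) : ℝ) * p ^ (j + 1) * (1 - p) ^ (n - (j + 1)) * Ring.choose (δ + j) j := by
  rw [divPoly_eq_binomSum, binomSum, sum_choose_mul_pow_eq_sum_bernstein, sum_range_succ']
  simp only [mul_sub, sum_sub_distrib, Ring.sum_choose_mul_choose, Nat.cast_zero, add_zero,
    Ring.choose_zero_right, sub_self, mul_zero, zero_mul]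
  refine sum_congr rfl fun j _ => ?_
  have hpascal : Ring.choose (δ + (j + 1 : ℕ)) (j + 1) -
      Ring.choose (δ - 1 + (j + 1 : ℕ)) (j + 1) = Ring.choose (δ + j) j := by
    rw [Nat.cast_add_one, ← add_assoc, sub_add_add_cancel, Ring.choose_succ_succ,
      add_sub_cancel_right]
  rw [← mul_sub, hpascal]
  ring

theorem monotoneOn_divPoly_delta (n : ℕ) {p : ℝ} (hp₀ : 0 ≤ p) (hp₁ : p ≤ 1) :
    MonotoneOn (fun δ => divPoly n p δ) (Icc 0 1) := by
  intro x hx y hy hxy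
  have hq : 0 ≤ 1 - p := sub_nonneg.mpr hp₁
  simp only [divPoly_eq_sum_bernstein]
  gcongr with j
  exact Ring.monotoneOn_choose_add_natCast_self j (show -1 ≤ x by linarith [hx.1])
    (show -1 ≤ y by linarith [hy.1]) hxy

theorem convexOn_divPoly_delta (n : ℕ) {p : ℝ} (hp₀ : 0 ≤ p) (hp₁ : p ≤ 1) :
    ConvexOn ℝ (Icc 0 1) (fun δ => divPoly n p δ) := by
  have hq : 0 ≤ 1 - p := sub_nonneg.mpr hp₁
  have hsub : Icc (0 : ℝ) 1 ⊆ Ici (-1) := fun x hx => show -1 ≤ x by linarith [hx.1]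
  simp only [divPoly_eq_sum_bernstein]
  exact convexOn_sum (convex_Icc 0 1) fun j _ =>
    ((Ring.convexOn_choose_add_natCast_self j).subset hsub (convex_Icc 0 1)).smul (by positivity)

theorem divPoly_delta_zero (n : ℕ) (p : ℝ) : divPoly n p 0 = 1 - (1 - p) ^ n := by
  have hbin := add_pow p (1 - p) n
  rw [add_sub_cancel, one_pow, sum_range_succ'] at hbin
  simp only [pow_zero, one_mul, Nat.sub_zero, Nat.choose_zero_right, Nat.cast_one,
    mul_one] at hbin
  rw [divPoly_eq_sum_bernstein]
  simp only [zero_add, Ring.choose_natCast, Nat.choose_self, Nat.cast_one, mul_one]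
  calc _ = ∑ j ∈ range n, p ^ (j + 1) * (1 - p) ^ (n - (j + 1)) * (n.choose (j + 1) : ℝ) :=
        sum_congr rfl fun j _ => by ring
    _ = 1 - (1 - p) ^ n := by linarith

theorem divPoly_delta_one (n : ℕ) (p : ℝ) : divPoly n p 1 = n * p := by
  rw [divPoly, sum_eq_single 1]
  · simp
  · intro k hk hk1
    have hmem : 1 ∈ Finset.Icc 1 (k - 1) := by
      simp only [Finset.mem_Icc] at hk ⊢
      omega
    rw [prod_eq_zero hmem (by norm_num)]
    simp
  · intro h
    simp_all

theorem stmt19_general (n : ℕ) :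
    (∀ δ : ℝ, 0 ≤ δ → δ ≤ 1 →
      MonotoneOn (fun p : ℝ => divPoly n p δ) (Icc 0 1) ∧
      ConcaveOn ℝ (Icc 0 1) (fun p : ℝ => divPoly n p δ)) ∧
    (∀ p : ℝ, 0 ≤ p → p ≤ 1 →
      MonotoneOn (fun δ : ℝ => divPoly n p δ) (Icc 0 1) ∧
      ConvexOn ℝ (Icc 0 1) (fun δ : ℝ => divPoly n p δ) ∧
      divPoly n p 0 = 1 - (1 - p) ^ n ∧ divPoly n p 1 = n * p) :=
  ⟨fun _ hδ₀ hδ₁ => ⟨monotoneOn_divPoly_p n hδ₀, concaveOn_divPoly_p n hδ₀ hδ₁⟩,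
    fun p hp₀ hp₁ => ⟨monotoneOn_divPoly_delta n hp₀ hp₁, convexOn_divPoly_delta n hp₀ hp₁,
      divPoly_delta_zero n p, divPoly_delta_one n p⟩⟩

theorem stmt19 (n : ℕ) (hn : 1 ≤ n) :
    (∀ δ : ℝ, 0 ≤ δ → δ ≤ 1 →
      MonotoneOn (fun p : ℝ => divPoly n p δ) (Icc 0 1) ∧
      ConcaveOn ℝ (Icc 0 1) (fun p : ℝ => divPoly n p δ)) ∧
    (∀ p : ℝ, 0 ≤ p → p ≤ 1 →
      MonotoneOn (fun δ : ℝ => divPoly n p δ) (Icc 0 1) ∧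
      ConvexOn ℝ (Icc 0 1) (fun δ : ℝ => divPoly n p δ) ∧
      divPoly n p 0 = 1 - (1 - p) ^ n ∧ divPoly n p 1 = n * p) :=
  stmt19_general n
end
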